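/- arXiv:1010.2188 — 2 statements merged into one kernel-verified Lean document; each statement's English description precedes it below -/
import Mathlib

section
/- Let V be a finite-dimensional vector space over a field and N a nilpotent endomorphism of V. Then there exists a unique increasing filtration (M_r V)_{r∈ℤ} by subspaces, with M_r V = 0 for r ≪ 0 and M_r V = V for r ≫ 0, such that N(M_r V) ⊆ M_{r−2} V for all r, and such that for every r ≥ 0 the map N^r induces an isomorphism Gr^M_r V → Gr^M_{−r} V, where Gr^M_r V = M_r V / M_{r−1} V. -/
/-- `M` is a monodromy filtration for the nilpotent endomorphism `N`:
an increasing filtration, exhaustive and separated, with `N M_r ⊆ M_{r-2}`,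
and such that for every `r ≥ 0` the map `N^r` induces an isomorphism
`Gr^M_r → Gr^M_{-r}` (expressed via the kernel and the range of the composite
`M_r ↪ V —N^r→ V ↠ V/M_{-r-1}`). -/
def IsMonodromyFiltration {K V : Type*} [Field K] [AddCommGroup V] [Module K V]
    (N : V →ₗ[K] V) (M : ℤ → Submodule K V) : Prop :=
  Monotone M ∧
  (∃ a : ℤ, ∀ r ≤ a, M r = ⊥) ∧
  (∃ b : ℤ, ∀ r : ℤ, b ≤ r → M r = ⊤) ∧
  (∀ r : ℤ, Submodule.map N (M r) ≤ M (r - 2)) ∧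
  (∀ r : ℕ,
    LinearMap.ker ((M (-(r : ℤ) - 1)).mkQ ∘ₗ (N ^ r) ∘ₗ (M (r : ℤ)).subtype) =
      Submodule.comap (M (r : ℤ)).subtype (M ((r : ℤ) - 1)) ∧
    LinearMap.range ((M (-(r : ℤ) - 1)).mkQ ∘ₗ (N ^ r) ∘ₗ (M (r : ℤ)).subtype) =
      Submodule.map (M (-(r : ℤ) - 1)).mkQ (M (-(r : ℤ))))


section MonodromyInfra

variable {K V : Type*} [Field K] [AddCommGroup V] [Module K V]

open Submodule

/-- Relative version of the monodromy filtration predicate: an increasing filtration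
between the submodules `A` and `B`, expressed entirely inside the submodule lattice
of `V`. -/
def RelMF (N : V →ₗ[K] V) (A B : Submodule K V) (M : ℤ → Submodule K V) : Prop :=
  Monotone M ∧
  (∀ r : ℤ, A ≤ M r) ∧
  (∀ r : ℤ, M r ≤ B) ∧
  (∃ a : ℤ, ∀ r ≤ a, M r = A) ∧
  (∃ b : ℤ, ∀ r : ℤ, b ≤ r → M r = B) ∧
  (∀ r : ℤ, Submodule.map N (M r) ≤ M (r - 2)) ∧
  (∀ r : ℕ,
    M (r : ℤ) ⊓ Submodule.comap (N ^ r) (M (-(r : ℤ) - 1)) = M ((r : ℤ) - 1) ∧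
    Submodule.map (N ^ r) (M (r : ℤ)) ⊔ M (-(r : ℤ) - 1) = M (-(r : ℤ)))

lemma MF.map_pow_add (N : V →ₗ[K] V) (a b : ℕ) (p : Submodule K V) :
    map (N ^ (a + b)) p = map (N ^ a) (map (N ^ b) p) := by
  rw [pow_add, Module.End.mul_eq_comp, Submodule.map_comp]

lemma MF.map_map_pow (N : V →ₗ[K] V) (b : ℕ) (p : Submodule K V) :
    map N (map (N ^ b) p) = map (N ^ (b + 1)) p := by
  rw [pow_succ', Module.End.mul_eq_comp, Submodule.map_comp]

lemma MF.map_pow_map (N : V →ₗ[K] V) (b : ℕ) (p : Submodule K V) :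
    map (N ^ b) (map N p) = map (N ^ (b + 1)) p := by
  rw [pow_succ, Module.End.mul_eq_comp, Submodule.map_comp]

lemma MF.map_pow_self (N : V →ₗ[K] V) {A : Submodule K V} (hA : map N A ≤ A) :
    ∀ k : ℕ, map (N ^ k) A ≤ A := by
  intro k
  induction k with
  | zero => rw [pow_zero, Module.End.one_eq_id, Submodule.map_id]
  | succ k ih =>
    rw [← MF.map_map_pow]
    exact le_trans (map_mono ih) hA

lemma MF.map_pow_le (N : V →ₗ[K] V) {A B : Submodule K V} (hA : map N A ≤ A)
    {n : ℕ} (hnil : map (N ^ n) B ≤ A) {r : ℕ} (hr : n ≤ r) :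
    map (N ^ r) B ≤ A := by
  obtain ⟨k, rfl⟩ := Nat.exists_eq_add_of_le hr
  rw [add_comm, MF.map_pow_add]
  exact le_trans (map_mono hnil) (MF.map_pow_self N hA k)

lemma RelMF.stab_top {N : V →ₗ[K] V} {A B : Submodule K V} {M : ℤ → Submodule K V}
    (h : RelMF N A B M) (hA : map N A ≤ A) {n : ℕ}
    (hnil : map (N ^ (n + 1)) B ≤ A) :
    ∀ r : ℤ, (n : ℤ) ≤ r → M r = B := by
  obtain ⟨hmono, hAle, hleB, ⟨a, ha⟩, ⟨b, hb⟩, hN, hgr⟩ := h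
  have step : ∀ k : ℕ, (n : ℤ) + 1 ≤ (k : ℤ) → M (k : ℤ) = M ((k : ℤ) - 1) := by
    intro k hk
    have h2 : M (k : ℤ) ≤ comap (N ^ k) (M (-(k : ℤ) - 1)) := by
      rw [← Submodule.map_le_iff_le_comap]
      refine le_trans (map_mono (hleB _)) (le_trans ?_ (hAle _))
      exact MF.map_pow_le N hA hnil (by exact_mod_cast hk)
    rw [← (hgr k).1, inf_eq_left.mpr h2]
  have const : ∀ k : ℕ, M ((n : ℤ) + (k : ℤ)) = M (n : ℤ) := by
    intro k
    induction k with
    | zero => simp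
    | succ k ih =>
      have h3 := step (n + k + 1) (by push_cast; omega)
      rw [show ((n + k + 1 : ℕ) : ℤ) = (n : ℤ) + ((k : ℤ) + 1) from by push_cast; ring,
        show (n : ℤ) + ((k : ℤ) + 1) - 1 = (n : ℤ) + (k : ℤ) from by ring] at h3
      calc M ((n : ℤ) + ((k + 1 : ℕ) : ℤ)) = M ((n : ℤ) + ((k : ℤ) + 1)) := by push_cast; ring_nf
        _ = M ((n : ℤ) + (k : ℤ)) := h3
        _ = M (n : ℤ) := ih
  intro r hr
  have h1 : M r = M (n : ℤ) := by
    have := const (r - n).toNat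
    calc M r = M ((n : ℤ) + ((r - (n : ℤ)).toNat : ℤ)) := by congr 1; omega
      _ = M (n : ℤ) := this
  have h2 : M (n : ℤ) = B := by
    rcases le_or_gt b (n : ℤ) with hbn | hbn
    · exact hb _ hbn
    · calc M (n : ℤ) = M ((n : ℤ) + ((b - (n : ℤ)).toNat : ℤ)) := (const _).symm
        _ = M b := by congr 1; omega
        _ = B := hb _ le_rfl
  rw [h1, h2]

lemma RelMF.stab_bot {N : V →ₗ[K] V} {A B : Submodule K V} {M : ℤ → Submodule K V}
    (h : RelMF N A B M) (hA : map N A ≤ A) {n : ℕ}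
    (hnil : map (N ^ (n + 1)) B ≤ A) :
    ∀ r : ℤ, r ≤ -(n : ℤ) - 1 → M r = A := by
  obtain ⟨hmono, hAle, hleB, ⟨a, ha⟩, ⟨b, hb⟩, hN, hgr⟩ := h
  have step : ∀ k : ℕ, (n : ℤ) + 1 ≤ (k : ℤ) → M (-(k : ℤ)) = M (-(k : ℤ) - 1) := by
    intro k hk
    have h2 : map (N ^ k) (M (k : ℤ)) ≤ M (-(k : ℤ) - 1) := by
      refine le_trans (map_mono (hleB _)) (le_trans ?_ (hAle _))
      exact MF.map_pow_le N hA hnil (by exact_mod_cast hk)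
    rw [← (hgr k).2, sup_eq_right.mpr h2]
  have const : ∀ k : ℕ, M (-(n : ℤ) - 1 - (k : ℤ)) = M (-(n : ℤ) - 1) := by
    intro k
    induction k with
    | zero => simp
    | succ k ih =>
      have h3 := step (n + k + 1) (by push_cast; omega)
      rw [show -((n + k + 1 : ℕ) : ℤ) = -(n : ℤ) - 1 - (k : ℤ) from by push_cast; ring] at h3
      calc M (-(n : ℤ) - 1 - ((k + 1 : ℕ) : ℤ)) = M (-(n : ℤ) - 1 - (k : ℤ) - 1) := by
            congr 1; push_cast; ring
        _ = M (-(n : ℤ) - 1 - (k : ℤ)) := h3.symm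
        _ = M (-(n : ℤ) - 1) := ih
  intro r hr
  have h1 : M r = M (-(n : ℤ) - 1) := by
    have := const (-(n : ℤ) - 1 - r).toNat
    calc M r = M (-(n : ℤ) - 1 - ((-(n : ℤ) - 1 - r).toNat : ℤ)) := by congr 1; omega
      _ = M (-(n : ℤ) - 1) := this
  have h2 : M (-(n : ℤ) - 1) = A := by
    rcases le_or_gt (-(n : ℤ) - 1) a with han | han
    · exact ha _ han
    · calc M (-(n : ℤ) - 1) = M (-(n : ℤ) - 1 - ((-(n : ℤ) - 1 - a).toNat : ℤ)) := (const _).symm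
        _ = M a := by congr 1; omega
        _ = A := ha _ le_rfl
  rw [h1, h2]

lemma RelMF.eval_top_pred {N : V →ₗ[K] V} {A B : Submodule K V} {M : ℤ → Submodule K V}
    (h : RelMF N A B M) (hA : map N A ≤ A) {n : ℕ}
    (hnil : map (N ^ (n + 1)) B ≤ A) :
    M ((n : ℤ) - 1) = B ⊓ comap (N ^ n) A := by
  have h1 := (h.2.2.2.2.2.2 n).1
  rw [h.stab_top hA hnil (n : ℤ) le_rfl, h.stab_bot hA hnil (-(n : ℤ) - 1) le_rfl] at h1
  exact h1.symm

lemma RelMF.eval_bot_succ {N : V →ₗ[K] V} {A B : Submodule K V} {M : ℤ → Submodule K V}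
    (h : RelMF N A B M) (hA : map N A ≤ A) {n : ℕ}
    (hnil : map (N ^ (n + 1)) B ≤ A) :
    M (-(n : ℤ)) = map (N ^ n) B ⊔ A := by
  have h1 := (h.2.2.2.2.2.2 n).2
  rw [h.stab_top hA hnil (n : ℤ) le_rfl, h.stab_bot hA hnil (-(n : ℤ) - 1) le_rfl] at h1
  exact h1.symm

lemma MF.ker_comp_eq_iff (f : V →ₗ[K] V) {P Q R : Submodule K V} (hQP : Q ≤ P) :
    LinearMap.ker (R.mkQ ∘ₗ f ∘ₗ P.subtype) = comap P.subtype Q ↔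
      P ⊓ comap f R = Q := by
  rw [LinearMap.ker_comp, Submodule.ker_mkQ, Submodule.comap_comp]
  constructor
  · intro h
    have h2 := congrArg (map P.subtype) h
    rw [Submodule.map_comap_subtype, Submodule.map_comap_subtype] at h2
    rw [h2]
    exact inf_eq_right.mpr hQP
  · intro h
    rw [← h, Submodule.comap_inf, Submodule.comap_subtype_self, top_inf_eq]

lemma MF.range_comp_eq_iff (f : V →ₗ[K] V) {P R S : Submodule K V} (hRS : R ≤ S) :
    LinearMap.range (R.mkQ ∘ₗ f ∘ₗ P.subtype) = map R.mkQ S ↔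
      map f P ⊔ R = S := by
  rw [LinearMap.range_comp, LinearMap.range_comp, Submodule.range_subtype]
  constructor
  · intro h
    have h2 := congrArg (comap R.mkQ) h
    rw [Submodule.comap_map_mkQ, Submodule.comap_map_mkQ] at h2
    rw [sup_comm] at h2
    rw [h2]
    exact sup_eq_right.mpr hRS
  · intro h
    rw [← h, Submodule.map_sup, Submodule.mkQ_map_self, sup_bot_eq]


lemma MF.existsUnique (N : V →ₗ[K] V) :
    ∀ (n : ℕ) (A B : Submodule K V), A ≤ B → map N A ≤ A → map N B ≤ B →
      map (N ^ (n + 1)) B ≤ A → ∃! M : ℤ → Submodule K V, RelMF N A B M := by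
  intro n
  induction n with
  | zero =>
    intro A B hAB hA hB hnil
    have hNBA : map N B ≤ A := by rwa [pow_one] at hnil
    set Mz : ℤ → Submodule K V := fun r => if 0 ≤ r then B else A with hMzdef
    have hT : ∀ r : ℤ, 0 ≤ r → Mz r = B := by
      intro r hr; simp only [hMzdef]; rw [if_pos hr]
    have hBt : ∀ r : ℤ, r ≤ -1 → Mz r = A := by
      intro r hr; simp only [hMzdef]; rw [if_neg (by omega)]
    have hlow : ∀ r : ℤ, A ≤ Mz r := by
      intro r; simp only [hMzdef]; split_ifs
      · exact hAB
      · exact le_rfl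
    have hhigh : ∀ r : ℤ, Mz r ≤ B := by
      intro r; simp only [hMzdef]; split_ifs
      · exact le_rfl
      · exact hAB
    have hRel : RelMF N A B Mz := by
      refine ⟨?_, hlow, hhigh, ⟨-1, fun r hr => hBt r hr⟩, ⟨0, fun r hr => hT r hr⟩, ?_, ?_⟩
      · intro r s hrs
        simp only [hMzdef]
        split_ifs with h1 h2
        · exact le_rfl
        · exact absurd (le_trans h1 hrs) h2
        · exact hAB
        · exact le_rfl
      · intro r
        by_cases h : 0 ≤ r
        · rw [hT r h]
          exact le_trans hNBA (hlow (r - 2))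
        · rw [hBt r (by omega)]
          exact le_trans hA (hlow (r - 2))
      · intro r
        rw [hT (r : ℤ) (by omega), hBt (-(r : ℤ) - 1) (by omega)]
        rcases Nat.eq_zero_or_pos r with rfl | hrpos
        · constructor
          · rw [pow_zero, Module.End.one_eq_id, Submodule.comap_id,
              hBt _ (by omega : ((0 : ℕ) : ℤ) - 1 ≤ -1)]
            exact inf_eq_right.mpr hAB
          · rw [pow_zero, Module.End.one_eq_id, Submodule.map_id, hT _ (by omega)]
            exact sup_eq_left.mpr hAB
        · have hMr : map (N ^ r) B ≤ A := MF.map_pow_le N hA hnil hrpos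
          constructor
          · rw [inf_eq_left.2 (Submodule.map_le_iff_le_comap.1 hMr), hT ((r : ℤ) - 1) (by omega)]
          · rw [sup_eq_right.2 hMr, hBt (-(r : ℤ)) (by omega)]
    refine ⟨Mz, hRel, ?_⟩
    intro Mx hMx
    funext r
    by_cases h : 0 ≤ r
    · rw [hMx.stab_top hA (n := 0) hnil r (by omega), hT r h]
    · rw [hMx.stab_bot hA (n := 0) hnil r (by omega), hBt r (by omega)]
  | succ n IH =>
    intro A B hAB hA hB hnil
    have hBpow : ∀ k : ℕ, map (N ^ k) B ≤ B := MF.map_pow_self N hB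
    have hApow : ∀ k : ℕ, map (N ^ k) A ≤ A := MF.map_pow_self N hA
    have h2m : map (N ^ (n + 1)) (map (N ^ (n + 1)) B) ≤ A := by
      rw [← MF.map_pow_add]
      exact MF.map_pow_le N hA hnil (by omega)
    set Kp : Submodule K V := B ⊓ comap (N ^ (n + 1)) A with hKp
    set Ip : Submodule K V := map (N ^ (n + 1)) B ⊔ A with hIp
    have hIpKp : Ip ≤ Kp := by
      rw [hIp, hKp]
      exact sup_le (le_inf (hBpow _) (Submodule.map_le_iff_le_comap.mp h2m))
        (le_inf hAB (Submodule.map_le_iff_le_comap.mp (hApow _)))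
    have hKpB : Kp ≤ B := inf_le_left
    have hAIp : A ≤ Ip := le_sup_right
    have hKpA : map (N ^ (n + 1)) Kp ≤ A :=
      le_trans (map_mono inf_le_right) (Submodule.map_comap_le _ _)
    have hNIpA : map N Ip ≤ A := by
      rw [hIp, Submodule.map_sup, MF.map_map_pow]
      exact sup_le hnil hA
    have hNIp : map N Ip ≤ Ip := le_trans hNIpA hAIp
    have hNKp : map N Kp ≤ Kp := by
      rw [hKp]
      refine le_inf (le_trans (map_mono inf_le_left) hB) ?_
      refine Submodule.map_le_iff_le_comap.mp ?_
      rw [MF.map_pow_map]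
      exact le_trans (map_mono hKpB) hnil
    have hnil' : map (N ^ (n + 1)) Kp ≤ Ip := le_trans hKpA hAIp
    obtain ⟨M', hM', hM'uniq⟩ := IH Ip Kp hIpKp hNIp hNKp hnil'
    have hM'top : ∀ r : ℤ, (n : ℤ) ≤ r → M' r = Kp := hM'.stab_top hNIp hnil'
    have hM'bot : ∀ r : ℤ, r ≤ -(n : ℤ) - 1 → M' r = Ip := hM'.stab_bot hNIp hnil'
    have hM'p : M' ((n : ℤ) - 1) = Kp ⊓ comap (N ^ n) Ip := hM'.eval_top_pred hNIp hnil'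
    have hM'q : M' (-(n : ℤ)) = map (N ^ n) Kp ⊔ Ip := hM'.eval_bot_succ hNIp hnil'
    have crux1 : map N B ≤ Kp ⊓ comap (N ^ n) Ip := by
      refine le_inf (le_inf hB ?_) ?_
      · exact Submodule.map_le_iff_le_comap.mp (by rw [MF.map_pow_map]; exact hnil)
      · refine Submodule.map_le_iff_le_comap.mp ?_
        rw [MF.map_pow_map]
        rw [hIp]
        exact le_sup_left
    have crux2 : map N (map (N ^ n) Kp ⊔ Ip) ≤ A := by
      rw [Submodule.map_sup, MF.map_map_pow]
      exact sup_le hKpA hNIpA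
    set Mz : ℤ → Submodule K V :=
      fun r => if (n : ℤ) + 1 ≤ r then B else if r ≤ -(n : ℤ) - 2 then A else M' r with hMzdef
    have hMzTop : ∀ r : ℤ, (n : ℤ) + 1 ≤ r → Mz r = B := by
      intro r hr; simp only [hMzdef]; rw [if_pos hr]
    have hMzBot : ∀ r : ℤ, r ≤ -(n : ℤ) - 2 → Mz r = A := by
      intro r hr; simp only [hMzdef]; rw [if_neg (by omega), if_pos hr]
    have hMzMid : ∀ r : ℤ, -(n : ℤ) - 1 ≤ r → r ≤ (n : ℤ) → Mz r = M' r := by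
      intro r h1 h2; simp only [hMzdef]; rw [if_neg (by omega), if_neg (by omega)]
    have hM'low : ∀ r : ℤ, Ip ≤ M' r := hM'.2.1
    have hM'high : ∀ r : ℤ, M' r ≤ Kp := hM'.2.2.1
    have hlow : ∀ r : ℤ, A ≤ Mz r := by
      intro r; simp only [hMzdef]; split_ifs
      · exact hAB
      · exact le_rfl
      · exact le_trans hAIp (hM'low r)
    have hhigh : ∀ r : ℤ, Mz r ≤ B := by
      intro r; simp only [hMzdef]; split_ifs
      · exact le_rfl
      · exact hAB
      · exact le_trans (hM'high r) hKpB
    have hRel : RelMF N A B Mz := by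
      refine ⟨?_, hlow, hhigh, ⟨-(n : ℤ) - 2, fun r hr => hMzBot r hr⟩,
        ⟨(n : ℤ) + 1, fun r hr => hMzTop r hr⟩, ?_, ?_⟩
      · -- Monotone
        intro r s hrs
        rcases le_or_gt ((n : ℤ) + 1) s with hs | hs
        · rw [hMzTop s hs]; exact hhigh r
        rcases le_or_gt s (-(n : ℤ) - 2) with hs2 | hs2
        · rw [hMzBot s hs2, hMzBot r (le_trans hrs hs2)]
        · rw [hMzMid s (by omega) (by omega)]
          rcases le_or_gt r (-(n : ℤ) - 2) with hr2 | hr2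
          · rw [hMzBot r hr2]; exact le_trans hAIp (hM'low s)
          · rw [hMzMid r (by omega) (by omega)]
            exact hM'.1 hrs
      · -- N condition
        intro r
        by_cases h1 : r ≤ -(n : ℤ) - 2
        · rw [hMzBot r h1, hMzBot (r - 2) (by omega)]; exact hA
        by_cases h2 : r = -(n : ℤ) - 1
        · subst h2
          rw [hMzMid _ le_rfl (by omega), hM'bot _ le_rfl, hMzBot _ (by omega)]
          exact hNIpA
        by_cases h3 : r = -(n : ℤ)
        · subst h3
          rw [hMzMid _ (by omega) (by omega), hM'q, hMzBot _ (by omega)]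
          exact crux2
        by_cases h4 : r ≤ (n : ℤ)
        · rw [hMzMid r (by omega) h4, hMzMid (r - 2) (by omega) (by omega)]
          exact hM'.2.2.2.2.2.1 r
        by_cases h5 : r = (n : ℤ) + 1
        · subst h5
          rw [hMzTop _ le_rfl, hMzMid _ (by omega) (by omega),
            show (n : ℤ) + 1 - 2 = (n : ℤ) - 1 from by ring, hM'p]
          exact crux1
        by_cases h6 : r = (n : ℤ) + 2
        · subst h6
          rw [hMzTop _ (by omega), hMzMid _ (by omega) (by omega),
            show (n : ℤ) + 2 - 2 = (n : ℤ) from by ring, hM'top _ le_rfl]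
          exact le_trans crux1 inf_le_left
        · rw [hMzTop r (by omega), hMzTop (r - 2) (by omega)]
          exact hB
      · -- Gr conditions
        intro r
        by_cases hr : (r : ℤ) ≤ (n : ℤ)
        · rw [hMzMid (r : ℤ) (by omega) hr, hMzMid ((r : ℤ) - 1) (by omega) (by omega),
            hMzMid (-(r : ℤ) - 1) (by omega) (by omega), hMzMid (-(r : ℤ)) (by omega) (by omega)]
          exact hM'.2.2.2.2.2.2 r
        by_cases hr1 : r = n + 1
        · subst hr1
          push_cast
          constructor
          · rw [hMzTop _ (by omega), hMzBot _ (by omega), hMzMid _ (by omega) (by omega),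
              show (n : ℤ) + 1 - 1 = (n : ℤ) from by ring, hM'top _ le_rfl, hKp]
          · rw [hMzTop _ (by omega), hMzBot _ (by omega), hMzMid _ (by omega) (by omega),
              hM'bot _ (by omega), hIp]
        · have hrge : n + 2 ≤ r := by omega
          have hMa : map (N ^ r) B ≤ A := MF.map_pow_le N hA hnil (by omega)
          constructor
          · rw [hMzTop (r : ℤ) (by omega), hMzBot (-(r : ℤ) - 1) (by omega),
              hMzTop ((r : ℤ) - 1) (by omega)]
            rw [inf_eq_left]
            exact Submodule.map_le_iff_le_comap.mp hMa
          · rw [hMzTop (r : ℤ) (by omega), hMzBot (-(r : ℤ) - 1) (by omega),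
              hMzBot (-(r : ℤ)) (by omega)]
            rw [sup_eq_right]
            exact hMa
    refine ⟨Mz, hRel, ?_⟩
    -- Uniqueness
    intro Mx hMx
    have hxtop : ∀ r : ℤ, (n : ℤ) + 1 ≤ r → Mx r = B := by
      intro r hr
      exact hMx.stab_top hA (n := n + 1) hnil r (by push_cast; omega)
    have hxbot : ∀ r : ℤ, r ≤ -(n : ℤ) - 2 → Mx r = A := by
      intro r hr
      exact hMx.stab_bot hA (n := n + 1) hnil r (by push_cast; omega)
    have hxp : Mx ((n : ℤ)) = Kp := by
      have h0 := hMx.eval_top_pred hA (n := n + 1) hnil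
      rw [show (((n + 1 : ℕ)) : ℤ) - 1 = (n : ℤ) from by push_cast; ring] at h0
      rw [h0, hKp]
    have hxq : Mx (-(n : ℤ) - 1) = Ip := by
      have h0 := hMx.eval_bot_succ hA (n := n + 1) hnil
      rw [show -(((n + 1 : ℕ)) : ℤ) = -(n : ℤ) - 1 from by push_cast; ring] at h0
      rw [h0, hIp]
    set Mc : ℤ → Submodule K V := fun r => Mx (max (-(n : ℤ) - 1) (min r (n : ℤ))) with hMcdef
    obtain ⟨hxmono, hxA, hxB, -, -, hxN, hxgr⟩ := hMx
    have hcx : ∀ r : ℤ, -(n : ℤ) - 1 ≤ r → r ≤ (n : ℤ) → Mc r = Mx r := by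
      intro r h1 h2; simp only [hMcdef]; congr 1; omega
    have hctop : ∀ s : ℤ, (n : ℤ) ≤ s → Mc s = Kp := by
      intro s hs
      simp only [hMcdef]
      rw [show max (-(n : ℤ) - 1) (min s (n : ℤ)) = (n : ℤ) from by omega, hxp]
    have hcbot : ∀ s : ℤ, s ≤ -(n : ℤ) - 1 → Mc s = Ip := by
      intro s hs
      simp only [hMcdef]
      rw [show max (-(n : ℤ) - 1) (min s (n : ℤ)) = -(n : ℤ) - 1 from by omega, hxq]
    have hMcRel : RelMF N Ip Kp Mc := by
      refine ⟨?_, ?_, ?_, ⟨-(n : ℤ) - 1, fun r hr => hcbot r hr⟩,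
        ⟨(n : ℤ), fun r hr => hctop r hr⟩, ?_, ?_⟩
      · intro r s hrs
        simp only [hMcdef]
        exact hxmono (by omega)
      · intro r
        rw [← hxq]
        simp only [hMcdef]
        exact hxmono (by omega)
      · intro r
        rw [← hxp]
        simp only [hMcdef]
        exact hxmono (by omega)
      · intro r
        simp only [hMcdef]
        exact le_trans (hxN _) (hxmono (by omega))
      · intro r
        by_cases hr : (r : ℤ) ≤ (n : ℤ)
        · rw [hcx (r : ℤ) (by omega) hr, hcx ((r : ℤ) - 1) (by omega) (by omega),
            hcx (-(r : ℤ) - 1) (by omega) (by omega), hcx (-(r : ℤ)) (by omega) (by omega)]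
          exact hxgr r
        · have hrge : n + 1 ≤ r := by omega
          have hMa : map (N ^ r) Kp ≤ Ip := MF.map_pow_le N hNIp hnil' hrge
          constructor
          · rw [hctop (r : ℤ) (by omega), hcbot (-(r : ℤ) - 1) (by omega),
              hctop ((r : ℤ) - 1) (by omega)]
            rw [inf_eq_left]
            exact Submodule.map_le_iff_le_comap.mp hMa
          · rw [hctop (r : ℤ) (by omega), hcbot (-(r : ℤ) - 1) (by omega),
              hcbot (-(r : ℤ)) (by omega)]
            rw [sup_eq_right]
            exact hMa
    have hMcM' : Mc = M' := hM'uniq Mc hMcRel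
    funext r
    by_cases h1 : (n : ℤ) + 1 ≤ r
    · rw [hxtop r h1, hMzTop r h1]
    by_cases h2 : r ≤ -(n : ℤ) - 2
    · rw [hxbot r h2, hMzBot r h2]
    · rw [hMzMid r (by omega) (by omega), ← hMcM', hcx r (by omega) (by omega)]


lemma MF.iff_relMF (N : V →ₗ[K] V) (M : ℤ → Submodule K V) :
    IsMonodromyFiltration N M ↔ RelMF N ⊥ ⊤ M := by
  constructor
  · rintro ⟨h1, h2, h3, h4, h5⟩
    refine ⟨h1, fun r => bot_le, fun r => le_top, h2, h3, h4, fun r => ?_⟩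
    have hQP : M ((r : ℤ) - 1) ≤ M (r : ℤ) := h1 (by omega)
    have hRS : M (-(r : ℤ) - 1) ≤ M (-(r : ℤ)) := h1 (by omega)
    exact ⟨(MF.ker_comp_eq_iff (N ^ r) hQP).mp (h5 r).1,
      (MF.range_comp_eq_iff (N ^ r) hRS).mp (h5 r).2⟩
  · rintro ⟨h1, -, -, h4, h5, h6, h7⟩
    refine ⟨h1, h4, h5, h6, fun r => ?_⟩
    have hQP : M ((r : ℤ) - 1) ≤ M (r : ℤ) := h1 (by omega)
    have hRS : M (-(r : ℤ) - 1) ≤ M (-(r : ℤ)) := h1 (by omega)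
    exact ⟨(MF.ker_comp_eq_iff (N ^ r) hQP).mpr (h7 r).1,
      (MF.range_comp_eq_iff (N ^ r) hRS).mpr (h7 r).2⟩

end MonodromyInfra

/-- Existence and uniqueness of the monodromy filtration of a nilpotent
endomorphism of a finite-dimensional vector space. -/
theorem stmt_10 (K V : Type*) [Field K] [AddCommGroup V] [Module K V]
    [FiniteDimensional K V] (N : V →ₗ[K] V) (hN : IsNilpotent N) :
    ∃! M : ℤ → Submodule K V, IsMonodromyFiltration N M := by
  obtain ⟨k, hk⟩ := hN
  have hnil : Submodule.map (N ^ (k + 1)) (⊤ : Submodule K V) ≤ ⊥ := by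
    have : N ^ (k + 1) = 0 := by rw [pow_succ, hk, zero_mul]
    simp [this]
  obtain ⟨M, hM, hu⟩ := MF.existsUnique N k ⊥ ⊤ bot_le (by simp) le_top hnil
  exact ⟨M, (MF.iff_relMF N M).mpr hM, fun y hy => hu y ((MF.iff_relMF N y).mp hy)⟩
end

section
/- Let V be a finite-dimensional vector space over a field, N a nilpotent endomorphism, and for p ≥ 1, q ≥ 0 set Gr^q Gr_p V = (ker N^p ∩ im N^q)/((ker N^{p−1} ∩ im N^q) + (ker N^p ∩ im N^{q+1})), with N^0 = id. Then for all p ≥ 1 and q ≥ 0, the map N^q induces a well-defined isomorphism Gr^0 Gr_{p+q} V → Gr^q Gr_p V. -/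
/-- For a nilpotent endomorphism `N` of a finite-dimensional vector space and
`p ≥ 1`, `q ≥ 0`, the map `N^q` induces a well-defined isomorphism
`Gr^0 Gr_{p+q} V → Gr^q Gr_p V`: the composite
`ker N^{p+q} —N^q→ V ↠ V/D`, where
`D = (ker N^{p−1} ∩ im N^q) + (ker N^p ∩ im N^{q+1})`,
has kernel `ker N^{p+q−1} + (ker N^{p+q} ∩ im N)` and range the image of
`ker N^p ∩ im N^q` in `V/D`. -/
theorem stmt_12 (K V : Type*) [Field K] [AddCommGroup V] [Module K V]
    [FiniteDimensional K V] (N : V →ₗ[K] V) (hN : IsNilpotent N)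
    (p q : ℕ) (hp : 1 ≤ p) :
    LinearMap.ker
        (((LinearMap.ker (N ^ (p - 1)) ⊓ LinearMap.range (N ^ q)) ⊔
          (LinearMap.ker (N ^ p) ⊓ LinearMap.range (N ^ (q + 1)))).mkQ ∘ₗ
          (N ^ q) ∘ₗ (LinearMap.ker (N ^ (p + q))).subtype) =
      Submodule.comap (LinearMap.ker (N ^ (p + q))).subtype
        (LinearMap.ker (N ^ (p + q - 1)) ⊔
          (LinearMap.ker (N ^ (p + q)) ⊓ LinearMap.range N)) ∧
    LinearMap.range
        (((LinearMap.ker (N ^ (p - 1)) ⊓ LinearMap.range (N ^ q)) ⊔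
          (LinearMap.ker (N ^ p) ⊓ LinearMap.range (N ^ (q + 1)))).mkQ ∘ₗ
          (N ^ q) ∘ₗ (LinearMap.ker (N ^ (p + q))).subtype) =
      Submodule.map
        ((LinearMap.ker (N ^ (p - 1)) ⊓ LinearMap.range (N ^ q)) ⊔
          (LinearMap.ker (N ^ p) ⊓ LinearMap.range (N ^ (q + 1)))).mkQ
        (LinearMap.ker (N ^ p) ⊓ LinearMap.range (N ^ q)) := by
  have key : ∀ (a b : ℕ) (y : V), (N ^ (a + b)) y = (N ^ a) ((N ^ b) y) := by
    intro a b y; rw [pow_add, Module.End.mul_apply]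
  have key2 : ∀ (a : ℕ) (y : V), (N ^ a) (N y) = (N ^ (a + 1)) y := by
    intro a y; rw [key a 1, pow_one]
  have hpq : (p - 1) + q = p + q - 1 := by omega
  have hpq2 : p + (q + 1) = (p + q) + 1 := by omega
  constructor
  · ext ⟨x, hx⟩
    simp only [LinearMap.mem_ker, Submodule.mem_comap, LinearMap.coe_comp,
      Function.comp_apply, Submodule.coe_subtype, Submodule.mkQ_apply,
      Submodule.Quotient.mk_eq_zero]
    constructor
    · intro h
      rw [Submodule.mem_sup] at h
      obtain ⟨a, ha, b, hb, hab⟩ := h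
      obtain ⟨ha1, ha2⟩ := ha
      obtain ⟨hb1, hb2⟩ := hb
      obtain ⟨b', rfl⟩ := hb2
      simp only [SetLike.mem_coe, LinearMap.mem_ker] at ha1 hb1
      rw [Submodule.mem_sup]
      refine ⟨x - N b', ?_, N b', ⟨?_, ⟨b', rfl⟩⟩, by abel⟩
      · rw [LinearMap.mem_ker, ← hpq, key, map_sub, key2]
        have h2 : (N ^ q) x - (N ^ (q + 1)) b' = a := by rw [← hab]; abel
        rw [h2]; exact ha1
      · rw [SetLike.mem_coe, LinearMap.mem_ker, key2, ← hpq2, key]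
        exact hb1
    · intro h
      rw [Submodule.mem_sup] at h
      obtain ⟨u, hu, v, hv, huv⟩ := h
      obtain ⟨hv1, hv2⟩ := hv
      obtain ⟨w, rfl⟩ := hv2
      simp only [SetLike.mem_coe, LinearMap.mem_ker] at hu hv1
      rw [Submodule.mem_sup]
      refine ⟨(N ^ q) u, ⟨?_, ⟨u, rfl⟩⟩, (N ^ (q + 1)) w, ⟨?_, ⟨w, rfl⟩⟩, ?_⟩
      · rw [SetLike.mem_coe, LinearMap.mem_ker, ← key, hpq]; exact hu
      · rw [SetLike.mem_coe, LinearMap.mem_ker, ← key, hpq2, key, pow_one]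
        exact hv1
      · rw [← key2, ← map_add, huv]
  · ext y
    simp only [LinearMap.mem_range, LinearMap.coe_comp, Function.comp_apply,
      Submodule.coe_subtype, Submodule.mkQ_apply, Submodule.mem_map,
      Submodule.mem_inf, LinearMap.mem_ker]
    constructor
    · rintro ⟨⟨x, hx⟩, rfl⟩
      exact ⟨(N ^ q) x, ⟨by rw [← key]; exact hx, ⟨x, rfl⟩⟩, rfl⟩
    · rintro ⟨z, ⟨hz1, w, rfl⟩, rfl⟩
      exact ⟨⟨w, by rw [LinearMap.mem_ker, key]; exact hz1⟩, rfl⟩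
end
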